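/- arXiv:1206.0500 — 2 statements merged into one kernel-verified Lean document; each statement's English description precedes it below -/
import Mathlib

section
/- The polynomial g = m₂₃m₁₃ − m₂m₁₃₄ − m₁₃m₁₂ + m₁m₁₂₄ vanishes identically when the moments m_I are substituted by their expressions under the length-4 binary hidden Markov parametrization; i.e., g is a quadric invariant of BHMM(4). -/
open Matrix

/-- `M 0 = T`, `M 1 = P₁` with `(P₁) j k = E j 1 * T j k`. -/
noncomputable def Mχ (T E : Matrix (Fin 2) (Fin 2) ℂ) : Fin 2 → Matrix (Fin 2) (Fin 2) ℂ
  | 0 => T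
  | 1 => Matrix.of fun j k => E j 1 * T j k

/-- `M₂ = 𝟙π`. -/
noncomputable def M2 (π : Fin 2 → ℂ) : Matrix (Fin 2) (Fin 2) ℂ :=
  Matrix.of fun _ j => π j

/-- Length-4 moment `m_I = tr(M₂ M_{χ₁} M_{χ₂} M_{χ₃} M_{χ₄})`, `χᵢ = 1` iff `i ∈ I`. -/
noncomputable def mom4 (π : Fin 2 → ℂ) (T E : Matrix (Fin 2) (Fin 2) ℂ)
    (χ₁ χ₂ χ₃ χ₄ : Fin 2) : ℂ :=
  Matrix.trace (M2 π * Mχ T E χ₁ * Mχ T E χ₂ * Mχ T E χ₃ * Mχ T E χ₄)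

/-- The quadric `g = m₂₃m₁₃ − m₂m₁₃₄ − m₁₃m₁₂ + m₁m₁₂₄` is an invariant of BHMM(4):
it vanishes identically for all HMM parameters `(π, T, E)` with row sums 1. -/
theorem quadric_invariant_bhmm4 (π : Fin 2 → ℂ) (T E : Matrix (Fin 2) (Fin 2) ℂ)
    (hπ : π 0 + π 1 = 1)
    (hT : ∀ j, T j 0 + T j 1 = 1)
    (hE : ∀ j, E j 0 + E j 1 = 1) :
    let m₁ := mom4 π T E 1 0 0 0
    let m₂ := mom4 π T E 0 1 0 0
    let m₁₂ := mom4 π T E 1 1 0 0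
    let m₁₃ := mom4 π T E 1 0 1 0
    let m₂₃ := mom4 π T E 0 1 1 0
    let m₁₂₄ := mom4 π T E 1 1 0 1
    let m₁₃₄ := mom4 π T E 1 0 1 1
    m₂₃ * m₁₃ - m₂ * m₁₃₄ - m₁₃ * m₁₂ + m₁ * m₁₂₄ = 0 := by
  intro m₁ m₂ m₁₂ m₁₃ m₂₃ m₁₂₄ m₁₃₄
  have hπ1 : π 1 = 1 - π 0 := by linear_combination hπ
  have hT0 : T 0 1 = 1 - T 0 0 := by linear_combination hT 0
  have hT1 : T 1 1 = 1 - T 1 0 := by linear_combination hT 1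
  simp only [m₁, m₂, m₁₂, m₁₃, m₂₃, m₁₂₄, m₁₃₄, mom4, Mχ, M2, Matrix.trace,
    Matrix.diag, Matrix.mul_apply, Matrix.of_apply, Fin.sum_univ_two, hπ1, hT0, hT1]
  ring
end

section
/- Every 3×3 minor of the 4×3 matrix A' = [[m_∅, m_∅, m₁],[m₂, m₃, m₁₃],[m₁, m₂, m₁₂],[m₁₂, m₂₃, m₁₂₃]] vanishes identically when the entries are substituted by the length-3 binary hidden Markov moment parametrization (with m_∅ = 1); i.e., rank(A') ≤ 2 on the BHMM(3) model. -/
open Matrix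

/-- Length-3 moment `m_I = tr(M₂ M_{χ₁} M_{χ₂} M_{χ₃})`, `χᵢ = 1` iff `i ∈ I`. -/
noncomputable def mom3 (π : Fin 2 → ℂ) (T E : Matrix (Fin 2) (Fin 2) ℂ)
    (χ₁ χ₂ χ₃ : Fin 2) : ℂ :=
  Matrix.trace (M2 π * Mχ T E χ₁ * Mχ T E χ₂ * Mχ T E χ₃)

/-- The 4×3 matrix `A' = [[m_∅, m_∅, m₁],[m₂, m₃, m₁₃],[m₁, m₂, m₁₂],[m₁₂, m₂₃, m₁₂₃]]`
of length-3 BHMM moments. -/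
noncomputable def Amat (π : Fin 2 → ℂ) (T E : Matrix (Fin 2) (Fin 2) ℂ) :
    Matrix (Fin 4) (Fin 3) ℂ :=
  !![mom3 π T E 0 0 0, mom3 π T E 0 0 0, mom3 π T E 1 0 0;
     mom3 π T E 0 1 0, mom3 π T E 0 0 1, mom3 π T E 1 0 1;
     mom3 π T E 1 0 0, mom3 π T E 0 1 0, mom3 π T E 1 1 0;
     mom3 π T E 1 1 0, mom3 π T E 0 1 1, mom3 π T E 1 1 1]


/-- `det (X * Y) = 0` when the middle dimension is 2 < 3 (Cauchy–Binet degenerate case). -/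
lemma det_mul_rank_two (X : Matrix (Fin 3) (Fin 2) ℂ) (Y : Matrix (Fin 2) (Fin 3) ℂ) :
    (X * Y).det = 0 := by
  simp only [Matrix.det_fin_three, Matrix.mul_apply, Fin.sum_univ_two]
  ring

lemma mom3_eval (π : Fin 2 → ℂ) (T E : Matrix (Fin 2) (Fin 2) ℂ) (χ₁ χ₂ χ₃ : Fin 2) :
    mom3 π T E χ₁ χ₂ χ₃ =
      ((π 0 * Mχ T E χ₁ 0 0 + π 1 * Mχ T E χ₁ 1 0) *
        (Mχ T E χ₂ 0 0 * Mχ T E χ₃ 0 0 + Mχ T E χ₂ 0 1 * Mχ T E χ₃ 1 0) +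
       (π 0 * Mχ T E χ₁ 0 1 + π 1 * Mχ T E χ₁ 1 1) *
        (Mχ T E χ₂ 1 0 * Mχ T E χ₃ 0 0 + Mχ T E χ₂ 1 1 * Mχ T E χ₃ 1 0)) +
      ((π 0 * Mχ T E χ₁ 0 0 + π 1 * Mχ T E χ₁ 1 0) *
        (Mχ T E χ₂ 0 0 * Mχ T E χ₃ 0 1 + Mχ T E χ₂ 0 1 * Mχ T E χ₃ 1 1) +
       (π 0 * Mχ T E χ₁ 0 1 + π 1 * Mχ T E χ₁ 1 1) *
        (Mχ T E χ₂ 1 0 * Mχ T E χ₃ 0 1 + Mχ T E χ₂ 1 1 * Mχ T E χ₃ 1 1)) := by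
  simp only [mom3, Matrix.trace_fin_two, Matrix.mul_apply, Fin.sum_univ_two, M2,
    Matrix.of_apply]
  ring

lemma Mχ_zero_apply (T E : Matrix (Fin 2) (Fin 2) ℂ) (j k : Fin 2) :
    Mχ T E 0 j k = T j k := rfl

lemma Mχ_one_apply (T E : Matrix (Fin 2) (Fin 2) ℂ) (j k : Fin 2) :
    Mχ T E 1 j k = E j 1 * T j k := rfl

set_option maxHeartbeats 1000000 in
/-- Every 3×3 minor of `A'` vanishes identically on the BHMM(3) model:
`rank A' ≤ 2` for all HMM parameters with row sums 1. -/
theorem minors_vanish_bhmm3 (π : Fin 2 → ℂ) (T E : Matrix (Fin 2) (Fin 2) ℂ)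
    (hπ : π 0 + π 1 = 1)
    (hT : ∀ j, T j 0 + T j 1 = 1)
    (hE : ∀ j, E j 0 + E j 1 = 1) :
    ∀ (r : Fin 3 → Fin 4) (c : Fin 3 → Fin 3),
      ((Amat π T E).submatrix r c).det = 0 := by
  intro r c
  have hT0 : T 0 1 = 1 - T 0 0 := eq_sub_of_add_eq' (hT 0)
  have hT1 : T 1 1 = 1 - T 1 0 := eq_sub_of_add_eq' (hT 1)
  have key : Amat π T E =
      (!![1, 1;
          T 0 0 * E 0 1 + T 0 1 * E 1 1, T 1 0 * E 0 1 + T 1 1 * E 1 1;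
          E 0 1, E 1 1;
          E 0 1 * (T 0 0 * E 0 1 + T 0 1 * E 1 1),
            E 1 1 * (T 1 0 * E 0 1 + T 1 1 * E 1 1)] : Matrix (Fin 4) (Fin 2) ℂ) *
      (!![π 0, π 0 * T 0 0 + π 1 * T 1 0,
            π 0 * E 0 1 * T 0 0 + π 1 * E 1 1 * T 1 0;
          π 1, π 0 * T 0 1 + π 1 * T 1 1,
            π 0 * E 0 1 * T 0 1 + π 1 * E 1 1 * T 1 1] : Matrix (Fin 2) (Fin 3) ℂ) := by
    ext i j
    fin_cases i <;> fin_cases j <;>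
      simp [Amat, mom3_eval, Mχ_zero_apply, Mχ_one_apply, Matrix.mul_apply,
        Fin.sum_univ_two, hT0, hT1] <;>
      ring
  rw [key, Matrix.submatrix_mul _ _ r id c Function.bijective_id]
  exact det_mul_rank_two _ _
end
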